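/- In the two-party state-cutting model, if under an m-partition (P,T) party i wins at least ⌊m_i/2⌋ districts that are competitive for i (i.e., districts D with v_i^i(D) = 1/(2m) and T(D) = i), then (P,T) satisfies the geometric target for party i, regardless of whether i is a minority or majority party. -/

import Mathlib

open MeasureTheory Set

noncomputable section

/-- A district is a finite union of closed intervals contained in `[0,1]`. -/
def IsDistrict (D : Set ℝ) : Prop :=
  D ⊆ Icc 0 1 ∧ ∃ s : Finset (ℝ × ℝ), D = ⋃ p ∈ s, Icc p.1 p.2

/-- Lebesgue measure of a set, as a real number. -/
def mu (D : Set ℝ) : ℝ := (volume D).toReal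

/-- The voter mass of `D` with respect to density `f`. -/
def vmass (f : ℝ → ℝ) (D : Set ℝ) : ℝ := ∫ x in D, f x

/-- An `m`-partition of `[0,1]`: `m` districts of measure `1/m`, pairwise
intersecting in measure zero, covering `[0,1]`, with a tie-breaking rule. -/
structure MPartition (m : ℕ) where
  dist : Fin m → Set ℝ
  tie : Fin m → Fin 2
  isDistrict : ∀ k, IsDistrict (dist k)
  measure_eq : ∀ k, mu (dist k) = 1 / m
  almost_disjoint : ∀ k₁ k₂, k₁ ≠ k₂ → mu (dist k₁ ∩ dist k₂) = 0
  cover : (⋃ k, dist k) = Icc 0 1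

/-- Party `j` wins district `k` (according to the beliefs `g`, where `g j` is the
density of party `j`'s support) under the partition `P`. -/
def Wins (g : Fin 2 → ℝ → ℝ) {m : ℕ} (P : MPartition m) (j : Fin 2) (k : Fin m) : Prop :=
  vmass (g j) (P.dist k) > 1 / (2 * m) ∨
    (vmass (g j) (P.dist k) = 1 / (2 * m) ∧ P.tie k = j)

/-- The number of districts party `j` wins under `P` according to beliefs `g`. -/
def seats (g : Fin 2 → ℝ → ℝ) {m : ℕ} (P : MPartition m) (j : Fin 2) : ℕ :=
  Nat.card {k : Fin m // Wins g P j k}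

/-- The set of possible seat counts for party `j` over all `m`-partitions. -/
def seatSet (g : Fin 2 → ℝ → ℝ) (m : ℕ) (j : Fin 2) : Set ℕ :=
  {u | ∃ P : MPartition m, seats g P j = u}

/-- A district is competitive (w.r.t. beliefs `g`) if some party has exactly
half of the support in it. -/
def Competitive (g : Fin 2 → ℝ → ℝ) (D : Set ℝ) : Prop :=
  ∃ j : Fin 2, vmass (g j) D = mu D / 2

/-- `mi` is the largest integer `k` such that some district of measure `k/m`
is competitive. -/
def MaxCompetitive (m : ℕ) (g : Fin 2 → ℝ → ℝ) (mi : ℕ) : Prop :=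
  (∃ D, IsDistrict D ∧ Competitive g D ∧ mu D = (mi : ℝ) / m) ∧
  ∀ k : ℕ, (∃ D, IsDistrict D ∧ Competitive g D ∧ mu D = (k : ℝ) / m) → k ≤ mi

lemma IsDistrict.measurableSet {D : Set ℝ} (h : IsDistrict D) : MeasurableSet D := by
  obtain ⟨-, s, rfl⟩ := h
  exact s.measurableSet_biUnion (fun p _ => measurableSet_Icc)

lemma IsDistrict.volume_ne_top {D : Set ℝ} (h : IsDistrict D) : volume D ≠ ⊤ := by
  refine ne_top_of_le_ne_top ?_ (measure_mono h.1)
  simp [Real.volume_Icc]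

lemma isDistrict_empty : IsDistrict (∅ : Set ℝ) :=
  ⟨empty_subset _, ∅, by simp⟩

lemma IsDistrict.union {A B : Set ℝ} (hA : IsDistrict A) (hB : IsDistrict B) :
    IsDistrict (A ∪ B) := by
  obtain ⟨hA1, sA, rfl⟩ := hA
  obtain ⟨hB1, sB, rfl⟩ := hB
  exact ⟨union_subset hA1 hB1, sA ∪ sB, by rw [Finset.set_biUnion_union]⟩

lemma isDistrict_biUnion {ι : Type*} (t : Finset ι) (s : ι → Set ℝ)
    (h : ∀ k ∈ t, IsDistrict (s k)) : IsDistrict (⋃ k ∈ t, s k) := by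
  classical
  induction t using Finset.induction_on with
  | empty => simpa using isDistrict_empty
  | insert _ _ hat ih =>
    rename_i a t
    rw [Finset.set_biUnion_insert]
    exact (h a (Finset.mem_insert_self a t)).union
      (ih fun k hk => h k (Finset.mem_insert_of_mem hk))

lemma isDistrict_Icc {a b : ℝ} (h0 : 0 ≤ a) (h1 : b ≤ 1) : IsDistrict (Icc a b) := by
  refine ⟨fun x hx => ⟨le_trans h0 hx.1, le_trans hx.2 h1⟩, {(a,b)}, by simp⟩

section integ
variable {f : ℝ → ℝ}

lemma integrableOn_Icc01 (hf : Measurable f) (hr : ∀ x ∈ Icc (0:ℝ) 1, f x ∈ Icc (0:ℝ) 1) :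
    IntegrableOn f (Icc (0:ℝ) 1) := by
  refine Integrable.mono' (integrable_const 1) hf.aestronglyMeasurable.restrict ?_
  filter_upwards [ae_restrict_mem measurableSet_Icc] with x hx
  have := hr x hx
  rw [Real.norm_eq_abs, abs_le]
  constructor <;> linarith [this.1, this.2]

lemma integrableOn_subset (hf : Measurable f) (hr : ∀ x ∈ Icc (0:ℝ) 1, f x ∈ Icc (0:ℝ) 1)
    {D : Set ℝ} (hD : D ⊆ Icc 0 1) : IntegrableOn f D :=
  (integrableOn_Icc01 hf hr).mono_set hD

lemma vmass_nonneg (hf : Measurable f) (hr : ∀ x ∈ Icc (0:ℝ) 1, f x ∈ Icc (0:ℝ) 1)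
    {D : Set ℝ} (hD : D ⊆ Icc 0 1) (hDm : MeasurableSet D) : 0 ≤ vmass f D := by
  refine setIntegral_nonneg hDm (fun x hx => (hr x (hD hx)).1)

lemma vmass_biUnion {ι : Type*} (t : Finset ι) (s : ι → Set ℝ)
    (hd : ∀ k ∈ t, IsDistrict (s k))
    (hdisj : ∀ k₁ ∈ t, ∀ k₂ ∈ t, k₁ ≠ k₂ → mu (s k₁ ∩ s k₂) = 0)
    (hf : Measurable f) (hr : ∀ x ∈ Icc (0:ℝ) 1, f x ∈ Icc (0:ℝ) 1) :
    vmass f (⋃ k ∈ t, s k) = ∑ k ∈ t, vmass f (s k) := by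
  classical
  induction t using Finset.induction_on with
  | empty => simp [vmass]
  | insert _ _ hat ih =>
    rename_i a t
    rw [Finset.set_biUnion_insert, Finset.sum_insert hat]
    have hnull : ∀ k₁ ∈ insert a t, ∀ k₂ ∈ insert a t, k₁ ≠ k₂ →
        volume (s k₁ ∩ s k₂) = 0 := by
      intro k₁ h₁ k₂ h₂ hne
      have h := hdisj k₁ h₁ k₂ h₂ hne
      have hfin : volume (s k₁ ∩ s k₂) ≠ ⊤ :=
        ne_top_of_le_ne_top (hd k₁ h₁).volume_ne_top (measure_mono inter_subset_left)
      rw [mu] at h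
      exact (ENNReal.toReal_eq_zero_iff _).1 h |>.resolve_right hfin
    have hae : AEDisjoint volume (s a) (⋃ k ∈ t, s k) := by
      rw [AEDisjoint, inter_iUnion₂]
      refine le_antisymm ((measure_biUnion_finset_le t _).trans ?_) (zero_le (a := _))
      have hz : ∀ k ∈ t, volume (s a ∩ s k) = 0 := fun k hk =>
        hnull a (Finset.mem_insert_self a t) k (Finset.mem_insert_of_mem hk)
          (fun h => hat (h ▸ hk))
      rw [Finset.sum_eq_zero hz]
    have hmeas : MeasurableSet (⋃ k ∈ t, s k) :=
      (isDistrict_biUnion t s fun k hk => hd k (Finset.mem_insert_of_mem hk)).measurableSet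
    rw [vmass, integral_union_ae hae hmeas.nullMeasurableSet
      (integrableOn_subset hf hr (hd a (Finset.mem_insert_self a t)).1)
      (integrableOn_subset hf hr (isDistrict_biUnion t s
        fun k hk => hd k (Finset.mem_insert_of_mem hk)).1)]
    show vmass f (s a) + vmass f (⋃ k ∈ t, s k) = _
    rw [ih (fun k hk => hd k (Finset.mem_insert_of_mem hk))
      (fun k₁ h₁ k₂ h₂ hne => hdisj k₁ (Finset.mem_insert_of_mem h₁) k₂
        (Finset.mem_insert_of_mem h₂) hne)]

lemma mu_biUnion {ι : Type*} (t : Finset ι) (s : ι → Set ℝ)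
    (hd : ∀ k ∈ t, IsDistrict (s k))
    (hdisj : ∀ k₁ ∈ t, ∀ k₂ ∈ t, k₁ ≠ k₂ → mu (s k₁ ∩ s k₂) = 0) :
    mu (⋃ k ∈ t, s k) = ∑ k ∈ t, mu (s k) := by
  have hnull : ∀ k₁ ∈ t, ∀ k₂ ∈ t, k₁ ≠ k₂ → volume (s k₁ ∩ s k₂) = 0 := by
    intro k₁ h₁ k₂ h₂ hne
    have h := hdisj k₁ h₁ k₂ h₂ hne
    have hfin : volume (s k₁ ∩ s k₂) ≠ ⊤ :=
      ne_top_of_le_ne_top (hd k₁ h₁).volume_ne_top (measure_mono inter_subset_left)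
    rw [mu] at h
    exact (ENNReal.toReal_eq_zero_iff _).1 h |>.resolve_right hfin
  have : volume (⋃ k ∈ t, s k) = ∑ k ∈ t, volume (s k) :=
    measure_biUnion_finset₀ (fun k₁ h₁ k₂ h₂ hne => hnull k₁ h₁ k₂ h₂ hne)
      (fun k hk => (hd k hk).measurableSet.nullMeasurableSet)
  rw [mu, this, ENNReal.toReal_sum (fun k hk => (hd k hk).volume_ne_top)]
  rfl
end integ

section rot
variable {F : ℝ → ℝ}

def shiftSet (U : Set ℝ) (t : ℝ) : Set ℝ := (fun x => x - t) ⁻¹' U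

lemma shiftSet_biUnion (s : Finset (ℝ × ℝ)) (t : ℝ) :
    shiftSet (⋃ p ∈ s, Icc p.1 p.2) t = ⋃ p ∈ s, Icc (p.1 + t) (p.2 + t) := by
  simp [shiftSet, preimage_iUnion₂, preimage_sub_const_Icc]

lemma shiftSet_measurableSet {U : Set ℝ} (hU : MeasurableSet U) (t : ℝ) :
    MeasurableSet (shiftSet U t) :=
  hU.preimage (measurable_id.sub measurable_const)

lemma volume_shiftSet (U : Set ℝ) (t : ℝ) : volume (shiftSet U t) = volume U := by
  simp only [shiftSet, sub_eq_add_neg]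
  exact measure_preimage_add_right volume (-t) U

lemma volume_Icc_diff_Icc (a b c d : ℝ) :
    volume (Icc a b \ Icc c d) ≤ ENNReal.ofReal |a - c| + ENNReal.ofReal |b - d| := by
  have hsub : Icc a b \ Icc c d ⊆ Icc (min a c) (max a c) ∪ Icc (min b d) (max b d) := by
    rintro x ⟨⟨hx1, hx2⟩, hx3⟩
    rw [mem_Icc, not_and_or, not_le, not_le] at hx3
    rcases hx3 with h | h
    · exact Or.inl ⟨(min_le_left a c).trans hx1, h.le.trans (le_max_right a c)⟩
    · exact Or.inr ⟨(min_le_right b d).trans h.le, hx2.trans (le_max_left b d)⟩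
  calc volume (Icc a b \ Icc c d) ≤
      volume (Icc (min a c) (max a c)) + volume (Icc (min b d) (max b d)) :=
        le_trans (measure_mono hsub) (measure_union_le _ _)
    _ = ENNReal.ofReal |a - c| + ENNReal.ofReal |b - d| := by
        rw [Real.volume_Icc, Real.volume_Icc, max_sub_min_eq_abs, max_sub_min_eq_abs,
          abs_sub_comm c a, abs_sub_comm d b]

lemma volume_biUnion_Icc_ne_top (s : Finset (ℝ × ℝ)) (w : ℝ × ℝ → ℝ × ℝ) :
    volume (⋃ p ∈ s, Icc (w p).1 (w p).2) ≠ ⊤ := by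
  refine ne_top_of_le_ne_top ?_ (measure_biUnion_finset_le s _)
  refine ENNReal.sum_ne_top.2 fun p _ => ?_
  simp [Real.volume_Icc]

lemma shiftSet_diff_le (s : Finset (ℝ × ℝ)) (τ τ' : ℝ) :
    volume (shiftSet (⋃ p ∈ s, Icc p.1 p.2) τ' \ shiftSet (⋃ p ∈ s, Icc p.1 p.2) τ)
      ≤ s.card * ENNReal.ofReal (2 * |τ' - τ|) := by
  rw [shiftSet_biUnion, shiftSet_biUnion]
  have hsub : (⋃ p ∈ s, Icc (p.1 + τ') (p.2 + τ')) \ (⋃ p ∈ s, Icc (p.1 + τ) (p.2 + τ))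
      ⊆ ⋃ p ∈ s, (Icc (p.1 + τ') (p.2 + τ') \ Icc (p.1 + τ) (p.2 + τ)) := by
    rintro x ⟨hx1, hx2⟩
    simp only [mem_iUnion] at hx1 ⊢
    obtain ⟨p, hp, hxp⟩ := hx1
    refine ⟨p, hp, hxp, fun hc => hx2 ?_⟩
    exact mem_iUnion₂.2 ⟨p, hp, hc⟩
  refine le_trans (measure_mono hsub) (le_trans (measure_biUnion_finset_le s _) ?_)
  have hb : ∀ p ∈ s, volume (Icc (p.1 + τ') (p.2 + τ') \ Icc (p.1 + τ) (p.2 + τ))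
      ≤ ENNReal.ofReal (2 * |τ' - τ|) := by
    intro p _
    refine le_trans (volume_Icc_diff_Icc _ _ _ _) ?_
    have e1 : p.1 + τ' - (p.1 + τ) = τ' - τ := by ring
    have e2 : p.2 + τ' - (p.2 + τ) = τ' - τ := by ring
    rw [e1, e2, ← ENNReal.ofReal_add (abs_nonneg _) (abs_nonneg _)]
    exact ENNReal.ofReal_le_ofReal (by rw [two_mul])
  refine le_trans (Finset.sum_le_sum hb) ?_
  rw [Finset.sum_const, nsmul_eq_mul]

lemma integrableOn_of_bound (hF : Measurable F) (hF1 : ∀ x, |F x| ≤ 1)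
    {X : Set ℝ} (hfin : volume X ≠ ⊤) : IntegrableOn F X := by
  refine Integrable.mono' (g := fun _ => (1:ℝ))
    ((integrableOn_const_iff (C := (1:ℝ))).2 (Or.inr hfin.lt_top))
    hF.aestronglyMeasurable.restrict ?_
  exact Filter.Eventually.of_forall fun x => hF1 x

lemma setIntegral_le_vol (hF : Measurable F) (hF0 : ∀ x, 0 ≤ F x) (hF1 : ∀ x, F x ≤ 1)
    {X : Set ℝ} (hX : MeasurableSet X) (hfin : volume X ≠ ⊤) :
    0 ≤ (∫ x in X, F x) ∧ (∫ x in X, F x) ≤ (volume X).toReal := by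
  constructor
  · exact setIntegral_nonneg hX fun x _ => hF0 x
  · have : (∫ x in X, F x) ≤ ∫ x in X, (1:ℝ) := by
      refine setIntegral_mono_on
        (integrableOn_of_bound hF (fun x => by rw [abs_le]; exact ⟨by linarith [hF0 x], hF1 x⟩) hfin)
        ((integrableOn_const_iff (C := (1:ℝ))).2 (Or.inr hfin.lt_top)) hX fun x _ => hF1 x
    simpa [setIntegral_const, Measure.real] using this
end rot

section rot2
variable {F : ℝ → ℝ}

lemma abs_setIntegral_sub (hF : Measurable F) (hF0 : ∀ x, 0 ≤ F x) (hF1 : ∀ x, F x ≤ 1)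
    {S S' : Set ℝ} (hS : MeasurableSet S) (hS' : MeasurableSet S')
    (hSf : volume S ≠ ⊤) (hS'f : volume S' ≠ ⊤) :
    |(∫ x in S', F x) - ∫ x in S, F x| ≤
      (volume (S' \ S)).toReal + (volume (S \ S')).toReal := by
  have habs : ∀ x, |F x| ≤ 1 := fun x => abs_le.2 ⟨by linarith [hF0 x], hF1 x⟩
  have h1 : (∫ x in S', F x) = (∫ x in S' ∩ S, F x) + ∫ x in S' \ S, F x :=
    (integral_inter_add_diff hS (integrableOn_of_bound hF habs hS'f)).symm
  have h2 : (∫ x in S, F x) = (∫ x in S ∩ S', F x) + ∫ x in S \ S', F x :=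
    (integral_inter_add_diff hS' (integrableOn_of_bound hF habs hSf)).symm
  have hd1 := setIntegral_le_vol hF hF0 hF1 (hS'.diff hS)
    (ne_top_of_le_ne_top hS'f (measure_mono diff_subset))
  have hd2 := setIntegral_le_vol hF hF0 hF1 (hS.diff hS')
    (ne_top_of_le_ne_top hSf (measure_mono diff_subset))
  rw [h1, h2, inter_comm S S']
  have e : (∫ x in S' ∩ S, F x) + (∫ x in S' \ S, F x) -
      ((∫ x in S' ∩ S, F x) + ∫ x in S \ S', F x)
      = (∫ x in S' \ S, F x) - ∫ x in S \ S', F x := by ring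
  rw [e]
  rw [abs_le]
  constructor
  · nlinarith [hd1.1, hd2.2, ENNReal.toReal_nonneg (a := volume (S' \ S))]
  · nlinarith [hd2.1, hd1.2, ENNReal.toReal_nonneg (a := volume (S \ S'))]

lemma continuous_H (hF : Measurable F) (hF0 : ∀ x, 0 ≤ F x) (hF1 : ∀ x, F x ≤ 1)
    (s : Finset (ℝ × ℝ)) :
    Continuous (fun τ => ∫ x in shiftSet (⋃ p ∈ s, Icc p.1 p.2) τ, F x) := by
  set U := ⋃ p ∈ s, Icc p.1 p.2 with hUdef
  have hU : MeasurableSet U := s.measurableSet_biUnion (fun p _ => measurableSet_Icc)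
  have hfinU : volume U ≠ ⊤ := by
    simpa [hUdef] using volume_biUnion_Icc_ne_top s id
  have key : ∀ τ τ' : ℝ, |(∫ x in shiftSet U τ', F x) - ∫ x in shiftSet U τ, F x|
      ≤ 4 * s.card * |τ' - τ| := by
    intro τ τ'
    have hfin : ∀ σ : ℝ, volume (shiftSet U σ) ≠ ⊤ := fun σ => by
      rw [volume_shiftSet]; exact hfinU
    refine le_trans (abs_setIntegral_sub hF hF0 hF1 (shiftSet_measurableSet hU τ)
      (shiftSet_measurableSet hU τ') (hfin τ) (hfin τ')) ?_
    have b1 := shiftSet_diff_le s τ τ'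
    have b2 := shiftSet_diff_le s τ' τ
    rw [← hUdef] at b1 b2
    have hne : (s.card : ENNReal) * ENNReal.ofReal (2 * |τ' - τ|) ≠ ⊤ :=
      ENNReal.mul_ne_top (ENNReal.natCast_ne_top _) ENNReal.ofReal_ne_top
    have hre : ((s.card : ENNReal) * ENNReal.ofReal (2 * |τ' - τ|)).toReal
        = s.card * (2 * |τ' - τ|) := by
      rw [ENNReal.toReal_mul, ENNReal.toReal_ofReal (by positivity)]
      simp
    have t1 : (volume (shiftSet U τ' \ shiftSet U τ)).toReal ≤ s.card * (2 * |τ' - τ|) := by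
      rw [← hre]; exact ENNReal.toReal_mono hne b1
    have t2 : (volume (shiftSet U τ \ shiftSet U τ')).toReal ≤ s.card * (2 * |τ' - τ|) := by
      rw [← hre]
      refine ENNReal.toReal_mono hne ?_
      rw [abs_sub_comm τ' τ]
      exact b2
    nlinarith [t1, t2]
  refine Metric.continuous_iff.2 fun τ ε hε => ?_
  refine ⟨ε / (4 * s.card + 1), by positivity, fun τ' hd => ?_⟩
  rw [Real.dist_eq] at hd ⊢
  have hk := key τ τ'
  have hb : (0:ℝ) < ε / (4 * s.card + 1) := by positivity
  have hcard : (0:ℝ) ≤ 4 * s.card := by positivity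
  have hmain : 4 * (s.card:ℝ) * |τ' - τ| < ε := by
    have h1 : 4 * (s.card:ℝ) * |τ' - τ| ≤ 4 * s.card * (ε / (4 * s.card + 1)) :=
      mul_le_mul_of_nonneg_left hd.le hcard
    have h2 : 4 * (s.card:ℝ) * (ε / (4 * s.card + 1))
        < (4 * s.card + 1) * (ε / (4 * s.card + 1)) :=
      mul_lt_mul_of_pos_right (by linarith) hb
    have h3 : (4 * (s.card:ℝ) + 1) * (ε / (4 * s.card + 1)) = ε := by field_simp
    linarith
  linarith

lemma Hfun_eq {U : Set ℝ} (hU : MeasurableSet U) (τ : ℝ) :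
    (∫ x in shiftSet U τ, F x) = ∫ y in U, F (y + τ) := by
  rw [← integral_indicator (shiftSet_measurableSet hU τ)]
  have hpt : ∀ x, (shiftSet U τ).indicator F x
      = U.indicator (fun y => F (y + τ)) (x - τ) := by
    intro x
    by_cases h : x - τ ∈ U
    · rw [indicator_of_mem (show x ∈ shiftSet U τ from h), indicator_of_mem h,
        sub_add_cancel]
    · rw [indicator_of_notMem (show x ∉ shiftSet U τ from h), indicator_of_notMem h]
  simp_rw [hpt]
  rw [integral_sub_right_eq_self (U.indicator fun y => F (y + τ)) τ,
    integral_indicator hU]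
end rot2

section rot3
variable {F : ℝ → ℝ}

lemma translate_setIntegral (y a b : ℝ) (F : ℝ → ℝ) :
    (∫ τ in Icc a b, F (y + τ)) = ∫ σ in Icc (y + a) (y + b), F σ := by
  rw [← integral_indicator measurableSet_Icc, ← integral_indicator measurableSet_Icc]
  have hpt : ∀ τ, (Icc a b).indicator (fun τ' => F (y + τ')) τ
      = (Icc (y + a) (y + b)).indicator F (y + τ) := by
    intro τ
    by_cases h : τ ∈ Icc a b
    · rw [indicator_of_mem h, indicator_of_mem]
      exact ⟨by linarith [h.1], by linarith [h.2]⟩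
    · rw [indicator_of_notMem h, indicator_of_notMem]
      rw [mem_Icc] at h ⊢
      intro hc
      exact h ⟨by linarith [hc.1], by linarith [hc.2]⟩
  simp_rw [hpt]
  exact integral_add_left_eq_self ((Icc (y + a) (y + b)).indicator F) y

lemma full_integral_of_supp (hFint : Integrable F)
    (hFsupp : ∀ x, x ∉ Icc (0:ℝ) 1 → F x = 0) {a b : ℝ} (ha : a ≤ 0) (hb : 1 ≤ b) :
    (∫ x in Icc a b, F x) = ∫ x, F x := by
  rw [← integral_add_compl (measurableSet_Icc (a := a) (b := b)) hFint]
  have : (∫ x in (Icc a b)ᶜ, F x) = 0 := by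
    refine setIntegral_eq_zero_of_forall_eq_zero fun x hx => ?_
    refine hFsupp x fun hc => hx ⟨by linarith [hc.1], by linarith [hc.2]⟩
  rw [this, add_zero]

lemma H_avg (hF : Measurable F) (hF0 : ∀ x, 0 ≤ F x) (hF1 : ∀ x, F x ≤ 1)
    (hFsupp : ∀ x, x ∉ Icc (0:ℝ) 1 → F x = 0) (hFint : Integrable F)
    {U : Set ℝ} (hU : MeasurableSet U) (hU1 : U ⊆ Icc 0 1) (hUfin : volume U ≠ ⊤) :
    (∫ τ in Icc (-1:ℝ) 1, (∫ y in U, F (y + τ))) = (volume U).toReal * ∫ x, F x := by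
  set μ := volume.restrict (Icc (-1:ℝ) 1) with hμ
  set Ψ : ℝ → ℝ → ℝ := fun τ y => U.indicator 1 y * F (y + τ) with hΨ
  have hsec : ∀ τ, (∫ y in U, F (y + τ)) = ∫ y, Ψ τ y := by
    intro τ
    rw [← integral_indicator hU]
    refine integral_congr_ae (Filter.Eventually.of_forall fun y => ?_)
    by_cases h : y ∈ U
    · simp [hΨ, indicator_of_mem h]
    · simp [hΨ, indicator_of_notMem h]
  have hmeas : Measurable (Function.uncurry Ψ) := by
    have : Function.uncurry Ψ = fun q : ℝ × ℝ =>
        U.indicator 1 q.2 * F (q.2 + q.1) := rfl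
    rw [this]
    exact ((measurable_one.indicator hU).comp measurable_snd).mul
      (hF.comp (measurable_snd.add measurable_fst))
  have hint : Integrable (Function.uncurry Ψ) (μ.prod volume) := by
    refine Integrable.mono' (g := (univ ×ˢ U).indicator fun _ => (1:ℝ)) ?_
      hmeas.aestronglyMeasurable (Filter.Eventually.of_forall fun q => ?_)
    · rw [integrable_indicator_iff (MeasurableSet.univ.prod hU)]
      refine (integrableOn_const_iff (C := (1:ℝ))).2 (Or.inr ?_)
      rw [Measure.prod_prod]
      refine ENNReal.mul_lt_top ?_ hUfin.lt_top
      rw [hμ, Measure.restrict_apply_univ]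
      simp [Real.volume_Icc]
    · by_cases h : q.2 ∈ U
      · have : Function.uncurry Ψ q = F (q.2 + q.1) := by
          simp [hΨ, Function.uncurry, indicator_of_mem h]
        rw [this, indicator_of_mem (by exact ⟨trivial, h⟩ : q ∈ univ ×ˢ U)]
        exact abs_le.2 ⟨by linarith [hF0 (q.2 + q.1)], hF1 _⟩
      · have : Function.uncurry Ψ q = 0 := by
          simp [hΨ, Function.uncurry, indicator_of_notMem h]
        rw [this, indicator_of_notMem (by simp [h] : q ∉ univ ×ˢ U)]
        simp
  have hswap := integral_integral_swap hint
  have hinner : ∀ y, (∫ τ, Ψ τ y ∂μ) = U.indicator (fun _ => ∫ x, F x) y := by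
    intro y
    by_cases h : y ∈ U
    · have h01 := hU1 h
      have : ∀ τ, Ψ τ y = F (y + τ) := fun τ => by
        simp [hΨ, indicator_of_mem h]
      simp_rw [this]
      rw [hμ]
      rw [show (∫ τ in Icc (-1:ℝ) 1, F (y + τ)) = ∫ σ in Icc (y + -1) (y + 1), F σ from
        translate_setIntegral y (-1) 1 F]
      rw [full_integral_of_supp hFint hFsupp (by linarith [h01.1, h01.2] : y + -1 ≤ 0)
        (by linarith [h01.1, h01.2] : (1:ℝ) ≤ y + 1)]
      rw [indicator_of_mem h]
    · have : ∀ τ, Ψ τ y = 0 := fun τ => by simp [hΨ, indicator_of_notMem h]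
      simp_rw [this]
      rw [indicator_of_notMem h]
      simp
  calc (∫ τ in Icc (-1:ℝ) 1, (∫ y in U, F (y + τ)))
      = ∫ τ, (∫ y, Ψ τ y) ∂μ := by
        rw [hμ]; exact setIntegral_congr_fun measurableSet_Icc fun τ _ => hsec τ
    _ = ∫ y, (∫ τ, Ψ τ y ∂μ) := hswap
    _ = ∫ y, U.indicator (fun _ => ∫ x, F x) y := by simp_rw [hinner]
    _ = (volume U).toReal * ∫ x, F x := by
        rw [integral_indicator_const _ hU, smul_eq_mul]; rfl
end rot3

section rot4

lemma isDistrict_biUnion_Icc_inter (s : Finset (ℝ × ℝ)) (w : ℝ × ℝ → ℝ × ℝ) :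
    IsDistrict ((⋃ p ∈ s, Icc (w p).1 (w p).2) ∩ Icc 0 1) := by
  classical
  refine ⟨inter_subset_right, s.image (fun p => ((w p).1 ⊔ 0, (w p).2 ⊓ 1)), ?_⟩
  ext x
  constructor
  · rintro ⟨hx1, hx2⟩
    rw [mem_iUnion₂] at hx1
    obtain ⟨p, hp, hxp⟩ := hx1
    refine mem_iUnion₂.2 ⟨((w p).1 ⊔ 0, (w p).2 ⊓ 1), Finset.mem_image_of_mem _ hp, ?_⟩
    exact ⟨sup_le hxp.1 hx2.1, le_inf hxp.2 hx2.2⟩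
  · intro hx
    rw [mem_iUnion₂] at hx
    obtain ⟨q, hq, hxq⟩ := hx
    obtain ⟨p, hp, rfl⟩ := Finset.mem_image.1 hq
    refine ⟨mem_iUnion₂.2 ⟨p, hp, ?_⟩, ?_⟩
    · exact ⟨le_trans le_sup_left hxq.1, le_trans hxq.2 inf_le_left⟩
    · exact ⟨le_trans le_sup_right hxq.1, le_trans hxq.2 inf_le_right⟩

lemma Dt_isDistrict {U : Set ℝ} (hU : IsDistrict U) (t : ℝ) :
    IsDistrict ((shiftSet U t ∩ Icc 0 1) ∪ (shiftSet U (t-1) ∩ Icc 0 1)) := by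
  obtain ⟨hU1, s, rfl⟩ := hU
  rw [shiftSet_biUnion, shiftSet_biUnion]
  exact (isDistrict_biUnion_Icc_inter s (fun p => (p.1 + t, p.2 + t))).union
    (isDistrict_biUnion_Icc_inter s (fun p => (p.1 + (t-1), p.2 + (t-1))))

lemma shift_inter_left {U : Set ℝ} (hU1 : U ⊆ Icc 0 1) {t : ℝ} (ht : t ∈ Icc (0:ℝ) 1) :
    shiftSet U t ∩ Icc 0 1 = shiftSet (U ∩ Icc 0 (1-t)) t := by
  ext x
  simp only [shiftSet, mem_inter_iff, mem_preimage, mem_Icc]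
  constructor
  · rintro ⟨hxU, h0, h1⟩
    exact ⟨hxU, (hU1 hxU).1, by linarith⟩
  · rintro ⟨hxU, h0, h1⟩
    exact ⟨hxU, by linarith [ht.1], by linarith⟩

lemma shift_inter_right {U : Set ℝ} (hU1 : U ⊆ Icc 0 1) {t : ℝ} (ht : t ∈ Icc (0:ℝ) 1) :
    shiftSet U (t-1) ∩ Icc 0 1 = shiftSet (U ∩ Icc (1-t) 1) (t-1) := by
  ext x
  simp only [shiftSet, mem_inter_iff, mem_preimage, mem_Icc]
  constructor
  · rintro ⟨hxU, h0, h1⟩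
    exact ⟨hxU, by linarith, (hU1 hxU).2⟩
  · rintro ⟨hxU, h0, h1⟩
    exact ⟨hxU, by linarith, by linarith [ht.2, (hU1 hxU).2]⟩

lemma Dt_inter_subset {U : Set ℝ} (hU1 : U ⊆ Icc 0 1) (t : ℝ) :
    (shiftSet U t ∩ Icc 0 1) ∩ (shiftSet U (t-1) ∩ Icc 0 1) ⊆ {t} := by
  rintro x ⟨⟨hxt, -⟩, hxt1, -⟩
  have h1 := (hU1 hxt).1
  have h2 := (hU1 hxt1).2
  simp only [mem_singleton_iff]
  have : x - (t-1) ≤ 1 := h2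
  have : 0 ≤ x - t := h1
  linarith

lemma Dt_volume {U : Set ℝ} (hU1 : U ⊆ Icc 0 1) (hUm : MeasurableSet U)
    {t : ℝ} (ht : t ∈ Icc (0:ℝ) 1) :
    volume ((shiftSet U t ∩ Icc 0 1) ∪ (shiftSet U (t-1) ∩ Icc 0 1)) = volume U := by
  have hAm : MeasurableSet (shiftSet U t ∩ Icc 0 1) :=
    (shiftSet_measurableSet hUm t).inter measurableSet_Icc
  have hBm : MeasurableSet (shiftSet U (t-1) ∩ Icc 0 1) :=
    (shiftSet_measurableSet hUm (t-1)).inter measurableSet_Icc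
  have hAB : AEDisjoint volume (shiftSet U t ∩ Icc 0 1) (shiftSet U (t-1) ∩ Icc 0 1) :=
    measure_mono_null (Dt_inter_subset hU1 t) (measure_singleton t)
  rw [measure_union₀ hBm.nullMeasurableSet hAB, shift_inter_left hU1 ht,
    shift_inter_right hU1 ht, volume_shiftSet, volume_shiftSet]
  have hsplit : (U ∩ Icc 0 (1-t)) ∪ (U ∩ Icc (1-t) 1) = U := by
    ext x
    simp only [mem_union, mem_inter_iff, mem_Icc]
    constructor
    · rintro (⟨h, -⟩ | ⟨h, -⟩) <;> exact h
    · intro h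
      rcases le_total x (1-t) with hle | hle
      · exact Or.inl ⟨h, (hU1 h).1, hle⟩
      · exact Or.inr ⟨h, hle, (hU1 h).2⟩
  have hdisj : AEDisjoint volume (U ∩ Icc 0 (1-t)) (U ∩ Icc (1-t) 1) := by
    refine measure_mono_null (fun x hx => ?_) (measure_singleton (1-t))
    obtain ⟨⟨-, -, h1⟩, -, h2, -⟩ := hx
    simp only [mem_singleton_iff]
    linarith
  rw [← measure_union₀ ((hUm.inter measurableSet_Icc).nullMeasurableSet) hdisj, hsplit]
end rot4

section rot5
variable {F : ℝ → ℝ}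

lemma setIntegral_shift_clip (hF : Measurable F) (hF1 : ∀ x, |F x| ≤ 1)
    (hFsupp : ∀ x, x ∉ Icc (0:ℝ) 1 → F x = 0)
    {S : Set ℝ} (hS : MeasurableSet S) (hSfin : volume S ≠ ⊤) :
    (∫ x in S ∩ Icc 0 1, F x) = ∫ x in S, F x := by
  rw [← integral_inter_add_diff (measurableSet_Icc (a := (0:ℝ)) (b := 1))
    (integrableOn_of_bound hF hF1 hSfin)]
  have : (∫ x in S \ Icc 0 1, F x) = 0 :=
    setIntegral_eq_zero_of_forall_eq_zero fun x hx => hFsupp x hx.2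
  rw [this, add_zero]

lemma Dt_vmass (hF : Measurable F) (hF1 : ∀ x, |F x| ≤ 1)
    (hFsupp : ∀ x, x ∉ Icc (0:ℝ) 1 → F x = 0)
    {U : Set ℝ} (hU1 : U ⊆ Icc 0 1) (hUm : MeasurableSet U) (hUfin : volume U ≠ ⊤) (t : ℝ) :
    (∫ x in (shiftSet U t ∩ Icc 0 1) ∪ (shiftSet U (t-1) ∩ Icc 0 1), F x)
      = (∫ x in shiftSet U t, F x) + ∫ x in shiftSet U (t-1), F x := by
  have hfinA : volume (shiftSet U t) ≠ ⊤ := by rw [volume_shiftSet]; exact hUfin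
  have hfinB : volume (shiftSet U (t-1)) ≠ ⊤ := by rw [volume_shiftSet]; exact hUfin
  have hAm : MeasurableSet (shiftSet U t ∩ Icc 0 1) :=
    (shiftSet_measurableSet hUm t).inter measurableSet_Icc
  have hBm : MeasurableSet (shiftSet U (t-1) ∩ Icc 0 1) :=
    (shiftSet_measurableSet hUm (t-1)).inter measurableSet_Icc
  have hAB : AEDisjoint volume (shiftSet U t ∩ Icc 0 1) (shiftSet U (t-1) ∩ Icc 0 1) :=
    measure_mono_null (Dt_inter_subset hU1 t) (measure_singleton t)
  rw [integral_union_ae hAB hBm.nullMeasurableSet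
    (integrableOn_of_bound hF hF1 (ne_top_of_le_ne_top hfinA (measure_mono inter_subset_left)))
    (integrableOn_of_bound hF hF1 (ne_top_of_le_ne_top hfinB (measure_mono inter_subset_left)))]
  rw [setIntegral_shift_clip hF hF1 hFsupp (shiftSet_measurableSet hUm t) hfinA,
    setIntegral_shift_clip hF hF1 hFsupp (shiftSet_measurableSet hUm (t-1)) hfinB]

lemma rot (f : ℝ → ℝ) (hf : Measurable f) (hr : ∀ x ∈ Icc (0:ℝ) 1, f x ∈ Icc (0:ℝ) 1)
    (hV : (∫ x in Icc (0:ℝ) 1, f x) ≤ 1 / 2) {U : Set ℝ} (hU : IsDistrict U)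
    (hmass : mu U / 2 ≤ vmass f U) :
    ∃ D : Set ℝ, IsDistrict D ∧ mu D = mu U ∧ vmass f D = mu D / 2 := by
  classical
  set F : ℝ → ℝ := (Icc (0:ℝ) 1).indicator f with hFdef
  have hFmeas : Measurable F := hf.indicator measurableSet_Icc
  have hF0 : ∀ x, 0 ≤ F x := by
    intro x
    by_cases h : x ∈ Icc (0:ℝ) 1
    · rw [hFdef, indicator_of_mem h]; exact (hr x h).1
    · rw [hFdef, indicator_of_notMem h]
  have hF1 : ∀ x, F x ≤ 1 := by
    intro x
    by_cases h : x ∈ Icc (0:ℝ) 1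
    · rw [hFdef, indicator_of_mem h]; exact (hr x h).2
    · rw [hFdef, indicator_of_notMem h]; norm_num
  have hFabs : ∀ x, |F x| ≤ 1 := fun x => abs_le.2 ⟨by linarith [hF0 x], hF1 x⟩
  have hFsupp : ∀ x, x ∉ Icc (0:ℝ) 1 → F x = 0 := by
    intro x h; rw [hFdef]; exact indicator_of_notMem h f
  have hFint : Integrable F := by
    rw [hFdef]
    exact (integrableOn_Icc01 hf hr).integrable_indicator measurableSet_Icc
  have hFtot : (∫ x, F x) ≤ 1 / 2 := by
    rw [hFdef, integral_indicator measurableSet_Icc]; exact hV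
  have hFeqOn : ∀ x ∈ Icc (0:ℝ) 1, f x = F x := by
    intro x hx; rw [hFdef, indicator_of_mem hx]
  clear_value F
  have hFtot0 : 0 ≤ ∫ x, F x := integral_nonneg hF0
  obtain ⟨hU1, s, hUrep⟩ := hU
  have hUax : IsDistrict U := ⟨hU1, s, hUrep⟩
  have hUm : MeasurableSet U := hUax.measurableSet
  have hUfin : volume U ≠ ⊤ := hUax.volume_ne_top
  set L : ℝ := mu U with hLdef
  clear_value L
  have hL0 : 0 ≤ L := by rw [hLdef, mu]; exact ENNReal.toReal_nonneg
  set H : ℝ → ℝ := fun τ => ∫ x in shiftSet U τ, F x with hHdef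
  clear_value H
  have hHeq : ∀ τ, H τ = ∫ x in shiftSet U τ, F x := fun τ => by rw [hHdef]
  have Hcont : Continuous H := by
    rw [hHdef, hUrep]
    exact continuous_H hFmeas hF0 hF1 s
  have Hnonneg : ∀ τ, 0 ≤ H τ := by
    intro τ
    rw [hHeq]
    exact (setIntegral_le_vol hFmeas hF0 hF1 (shiftSet_measurableSet hUm τ)
      (by rw [volume_shiftSet]; exact hUfin)).1
  have H0 : H 0 = vmass f U := by
    have hsh : shiftSet U 0 = U := by ext x; simp [shiftSet]
    rw [hHeq, hsh]
    exact (setIntegral_congr_fun hUm fun x hx => hFeqOn x (hU1 hx)).symm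
  set mass : ℝ → ℝ := fun t => H t + H (t - 1) with hmassdef
  clear_value mass
  have hmasseq : ∀ t, mass t = H t + H (t - 1) := fun t => by rw [hmassdef]
  have masscont : Continuous mass := by
    rw [hmassdef]
    exact Hcont.add (Hcont.comp (continuous_id.sub continuous_const))
  have mass0 : L / 2 ≤ mass 0 := by
    rw [hmasseq, H0, show (0:ℝ) - 1 = -1 by norm_num]
    linarith [Hnonneg (-1), hmass]
  -- average bound
  have Havg : (∫ τ in Icc (-1:ℝ) 1, H τ) = (volume U).toReal * ∫ x, F x := by
    rw [show (∫ τ in Icc (-1:ℝ) 1, H τ) = ∫ τ in Icc (-1:ℝ) 1, (∫ y in U, F (y + τ)) from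
      setIntegral_congr_fun measurableSet_Icc fun τ _ => (hHeq τ).trans (Hfun_eq hUm τ)]
    exact H_avg hFmeas hF0 hF1 hFsupp hFint hUm hU1 hUfin
  have HavgLe : (∫ τ in Icc (-1:ℝ) 1, H τ) ≤ L / 2 := by
    rw [Havg]
    calc (volume U).toReal * ∫ x, F x ≤ L * (1/2) := by
          rw [hLdef, mu]
          exact mul_le_mul_of_nonneg_left hFtot ENNReal.toReal_nonneg
      _ = L / 2 := by ring
  -- integral identities
  have hIIH : ∀ a b : ℝ, IntervalIntegrable H volume a b :=
    fun a b => Hcont.intervalIntegrable a b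
  have hIImass : IntervalIntegrable mass volume 0 1 :=
    masscont.intervalIntegrable 0 1
  have hI2 : (∫ t in (0:ℝ)..1, H (t - 1)) = ∫ t in (-1:ℝ)..0, H t := by
    have h := intervalIntegral.integral_comp_sub_right (a := (0:ℝ)) (b := 1) H 1
    rw [show (0:ℝ) - 1 = -1 by norm_num, show (1:ℝ) - 1 = 0 by norm_num] at h
    exact h
  have hImass : (∫ t in (0:ℝ)..1, mass t) ≤ L / 2 := by
    have e1 : (∫ t in (0:ℝ)..1, mass t)
        = (∫ t in (0:ℝ)..1, H t) + ∫ t in (0:ℝ)..1, H (t - 1) := by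
      rw [show (∫ t in (0:ℝ)..1, mass t) = ∫ t in (0:ℝ)..1, (H t + H (t - 1)) from
        intervalIntegral.integral_congr fun t _ => hmasseq t]
      exact intervalIntegral.integral_add (hIIH 0 1)
        ((Hcont.comp (continuous_id.sub continuous_const)).intervalIntegrable 0 1)
    have e2 : (∫ t in (-1:ℝ)..0, H t) + (∫ t in (0:ℝ)..1, H t) = ∫ t in (-1:ℝ)..1, H t :=
      intervalIntegral.integral_add_adjacent_intervals (hIIH (-1) 0) (hIIH 0 1)
    have e3 : (∫ t in (-1:ℝ)..1, H t) = ∫ τ in Icc (-1:ℝ) 1, H τ := by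
      rw [intervalIntegral.integral_of_le (by norm_num : (-1:ℝ) ≤ 1),
        ← integral_Icc_eq_integral_Ioc]
    rw [e1, hI2]
    linarith [HavgLe, e2, e3]
  -- find a point with small mass
  have hex : ∃ t₀ ∈ Icc (0:ℝ) 1, mass t₀ ≤ L / 2 := by
    by_contra hcon
    push_neg at hcon
    have hpos : 0 < ∫ t in (0:ℝ)..1, (mass t - L / 2) := by
      refine intervalIntegral.intervalIntegral_pos_of_pos_on
        ((masscont.sub continuous_const).intervalIntegrable 0 1) ?_ (by norm_num)
      intro x hx
      have := hcon x ⟨hx.1.le, hx.2.le⟩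
      linarith
    have heq : (∫ t in (0:ℝ)..1, (mass t - L / 2))
        = (∫ t in (0:ℝ)..1, mass t) - (1 - 0) * (L / 2) := by
      rw [intervalIntegral.integral_sub hIImass (intervalIntegrable_const)]
      simp
    rw [heq] at hpos
    norm_num at hpos
    linarith [hImass]
  obtain ⟨t₀, ht₀, hmt₀⟩ := hex
  -- IVT
  have hIVT : L / 2 ∈ mass '' Icc 0 t₀ :=
    intermediate_value_Icc' ht₀.1 masscont.continuousOn ⟨hmt₀, mass0⟩
  obtain ⟨tstar, htstar, htstareq⟩ := hIVT
  have htstar01 : tstar ∈ Icc (0:ℝ) 1 := ⟨htstar.1, le_trans htstar.2 ht₀.2⟩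
  -- the district
  refine ⟨(shiftSet U tstar ∩ Icc 0 1) ∪ (shiftSet U (tstar-1) ∩ Icc 0 1),
    Dt_isDistrict hUax tstar, ?_, ?_⟩
  · simp only [mu]
    rw [Dt_volume hU1 hUm htstar01, hLdef, mu]
  · have hvol := Dt_volume hU1 hUm htstar01
    have hmuD : mu ((shiftSet U tstar ∩ Icc 0 1) ∪ (shiftSet U (tstar-1) ∩ Icc 0 1)) = L := by
      simp only [mu]
      rw [hvol, hLdef, mu]
    rw [hmuD]
    have hDt := Dt_vmass hFmeas hFabs hFsupp hU1 hUm hUfin tstar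
    have hcongr : vmass f ((shiftSet U tstar ∩ Icc 0 1) ∪ (shiftSet U (tstar-1) ∩ Icc 0 1))
        = ∫ x in (shiftSet U tstar ∩ Icc 0 1) ∪ (shiftSet U (tstar-1) ∩ Icc 0 1), F x := by
      refine setIntegral_congr_fun ?_ fun x hx => ?_
      · exact ((shiftSet_measurableSet hUm tstar).inter measurableSet_Icc).union
          ((shiftSet_measurableSet hUm (tstar-1)).inter measurableSet_Icc)
      · have hx01 : x ∈ Icc (0:ℝ) 1 := by
          rcases hx with ⟨-, h⟩ | ⟨-, h⟩ <;> exact h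
        exact hFeqOn x hx01
    show vmass f _ = L / 2
    rw [hcongr, hDt, ← hHeq tstar, ← hHeq (tstar - 1), ← hmasseq tstar, htstareq]
end rot5

section partition

lemma natCard_eq_filter {n : ℕ} (p : Fin n → Prop) [DecidablePred p] :
    Nat.card {k // p k} = (Finset.univ.filter p).card := by
  rw [Nat.card_eq_fintype_card, Fintype.card_subtype]

lemma seats_le_mi (m : ℕ) (hm : 1 ≤ m) (g : Fin 2 → ℝ → ℝ)
    (hgmeas : ∀ j, Measurable (g j))
    (hgrange : ∀ j, ∀ x ∈ Icc (0:ℝ) 1, g j x ∈ Icc (0:ℝ) 1)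
    (mi : ℕ) (hmi : MaxCompetitive m g mi) (j : Fin 2)
    (hV : (∫ x in Icc (0:ℝ) 1, g j x) ≤ 1 / 2) (Q : MPartition m) :
    seats g Q j ≤ mi := by
  classical
  have hcard : seats g Q j = (Finset.univ.filter (Wins g Q j)).card :=
    natCard_eq_filter _
  set Sfin : Finset (Fin m) := Finset.univ.filter (Wins g Q j) with hSdef
  set U : Set ℝ := ⋃ k ∈ Sfin, Q.dist k with hUdef
  have hUd : IsDistrict U := isDistrict_biUnion _ _ (fun k _ => Q.isDistrict k)
  have hmuU : mu U = Sfin.card / m := by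
    rw [hUdef, mu_biUnion _ _ (fun k _ => Q.isDistrict k)
      (fun k₁ _ k₂ _ hne => Q.almost_disjoint k₁ k₂ hne)]
    rw [Finset.sum_congr rfl (fun k _ => Q.measure_eq k), Finset.sum_const, nsmul_eq_mul]
    ring
  have hwge : ∀ k ∈ Sfin, 1 / (2 * (m:ℝ)) ≤ vmass (g j) (Q.dist k) := by
    intro k hk
    have hw : Wins g Q j k := (Finset.mem_filter.1 hk).2
    rcases hw with h | ⟨h, -⟩
    · exact h.le
    · exact h.ge
  have hvU : (Sfin.card : ℝ) / (2 * m) ≤ vmass (g j) U := by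
    rw [hUdef, vmass_biUnion _ _ (fun k _ => Q.isDistrict k)
      (fun k₁ _ k₂ _ hne => Q.almost_disjoint k₁ k₂ hne) (hgmeas j) (hgrange j)]
    calc (Sfin.card : ℝ) / (2 * m) = ∑ _k ∈ Sfin, 1 / (2 * (m:ℝ)) := by
          rw [Finset.sum_const, nsmul_eq_mul]; ring
      _ ≤ ∑ k ∈ Sfin, vmass (g j) (Q.dist k) := Finset.sum_le_sum hwge
  have hmass : mu U / 2 ≤ vmass (g j) U := by
    rw [hmuU]
    rw [div_div, mul_comm (m:ℝ) 2]
    exact hvU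
  obtain ⟨D, hDd, hDmu, hDv⟩ := rot (g j) (hgmeas j) (hgrange j) hV hUd hmass
  have : Sfin.card ≤ mi := by
    refine hmi.2 Sfin.card ⟨D, hDd, ⟨j, hDv⟩, ?_⟩
    rw [hDmu, hmuU]
  omega
end partition

section comb
variable (g : Fin 2 → ℝ → ℝ) {m : ℕ}

lemma flip_partition (P : MPartition m) (i j : Fin 2) (hji : j ≠ i) :
    ∃ P' : MPartition m, seats g P' i
      + Nat.card {k : Fin m // vmass (g i) (P.dist k) = 1 / (2 * m) ∧ P.tie k = i}
      = seats g P i := by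
  classical
  set c : Fin m → Prop := fun k => vmass (g i) (P.dist k) = 1 / (2 * (m:ℝ)) ∧ P.tie k = i
    with hcdef
  refine ⟨⟨P.dist, fun k => if c k then j else P.tie k, P.isDistrict, P.measure_eq,
    P.almost_disjoint, P.cover⟩, ?_⟩
  set P' : MPartition m := ⟨P.dist, fun k => if c k then j else P.tie k, P.isDistrict,
    P.measure_eq, P.almost_disjoint, P.cover⟩ with hP'def
  have hiff : ∀ k, Wins g P' i k ↔ Wins g P i k ∧ ¬ c k := by
    intro k
    by_cases hc : c k
    · simp only [Wins, hP'def, if_pos hc]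
      constructor
      · rintro (h | ⟨-, h⟩)
        · exact absurd h (by rw [hc.1]; exact lt_irrefl _)
        · exact absurd h hji
      · rintro ⟨-, h⟩; exact absurd hc h
    · simp only [Wins, hP'def, if_neg hc]
      exact ⟨fun h => ⟨h, hc⟩, fun h => h.1⟩
  have h1 : seats g P' i = (Finset.univ.filter (fun k => Wins g P i k ∧ ¬ c k)).card := by
    rw [seats, natCard_eq_filter]
    congr 1
    exact Finset.filter_congr fun k _ => by rw [hiff k]
  have h2 : Nat.card {k : Fin m // vmass (g i) (P.dist k) = 1 / (2 * m) ∧ P.tie k = i}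
      = (Finset.univ.filter (fun k => Wins g P i k ∧ c k)).card := by
    rw [natCard_eq_filter]
    congr 1
    refine Finset.filter_congr fun k _ => ?_
    constructor
    · intro h
      exact ⟨Or.inr h, h⟩
    · exact fun h => h.2
  have h3 : seats g P i = (Finset.univ.filter (Wins g P i)).card := natCard_eq_filter _
  rw [h1, h2, h3]
  rw [show (Finset.univ.filter (fun k => Wins g P i k ∧ ¬ c k))
      = (Finset.univ.filter (Wins g P i)).filter (fun k => ¬ c k) by
    rw [Finset.filter_filter]]
  rw [show (Finset.univ.filter (fun k => Wins g P i k ∧ c k))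
      = (Finset.univ.filter (Wins g P i)).filter c by
    rw [Finset.filter_filter]]
  rw [add_comm]
  exact Finset.card_filter_add_card_filter_not c

lemma vmass_pair (hm : 1 ≤ m) (hgmeas : ∀ j, Measurable (g j))
    (hgrange : ∀ j, ∀ x ∈ Icc (0:ℝ) 1, g j x ∈ Icc (0:ℝ) 1)
    {i j : Fin 2} (hgs : ∀ x ∈ Icc (0:ℝ) 1, g i x + g j x = 1)
    (Q : MPartition m) (k : Fin m) :
    vmass (g i) (Q.dist k) + vmass (g j) (Q.dist k) = 1 / m := by
  have hd := Q.isDistrict k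
  have hmeas := hd.measurableSet
  have e1 : vmass (g i) (Q.dist k) + vmass (g j) (Q.dist k)
      = ∫ x in Q.dist k, (g i x + g j x) := by
    rw [vmass, vmass, ← integral_add (integrableOn_subset (hgmeas i) (hgrange i) hd.1)
      (integrableOn_subset (hgmeas j) (hgrange j) hd.1)]
  rw [e1, setIntegral_congr_fun hmeas (fun x hx => hgs x (hd.1 hx))]
  rw [setIntegral_const, smul_eq_mul, mul_one, Measure.real, ← mu, Q.measure_eq k]

lemma wins_dichotomy (hm : 1 ≤ m) (hgmeas : ∀ j, Measurable (g j))
    (hgrange : ∀ j, ∀ x ∈ Icc (0:ℝ) 1, g j x ∈ Icc (0:ℝ) 1)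
    {i j : Fin 2} (hji : j ≠ i) (hgs : ∀ x ∈ Icc (0:ℝ) 1, g i x + g j x = 1)
    (Q : MPartition m) (k : Fin m) :
    Wins g Q i k ↔ ¬ Wins g Q j k := by
  have hsum := vmass_pair g hm hgmeas hgrange hgs Q k
  have hmr : (0:ℝ) < m := by exact_mod_cast hm
  have hhalf : 1 / (m:ℝ) - 1 / (2 * m) = 1 / (2 * m) := by field_simp; ring
  have htiecase : Q.tie k = i ∨ Q.tie k = j := by
    revert hji
    have : ∀ a b c : Fin 2, b ≠ c → (a = c ∨ a = b) := by decide
    intro hji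
    exact this (Q.tie k) j i hji
  constructor
  · rintro (h | ⟨h, htie'⟩) <;> rintro (h2 | ⟨h2, htie2⟩)
    · linarith
    · linarith [h2.le, h]
    · linarith [h.le, h2]
    · exact hji (htie'.symm.trans htie2).symm
  · intro h2
    rcases lt_trichotomy (vmass (g i) (Q.dist k)) (1 / (2 * (m:ℝ))) with hlt | heq | hgt
    · exfalso
      exact h2 (Or.inl (by linarith))
    · rcases htiecase with ht | ht
      · exact Or.inr ⟨heq, ht⟩
      · exfalso
        exact h2 (Or.inr ⟨by linarith, ht⟩)
    · exact Or.inl hgt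

lemma seats_pair (hm : 1 ≤ m) (hgmeas : ∀ j, Measurable (g j))
    (hgrange : ∀ j, ∀ x ∈ Icc (0:ℝ) 1, g j x ∈ Icc (0:ℝ) 1)
    {i j : Fin 2} (hji : j ≠ i) (hgs : ∀ x ∈ Icc (0:ℝ) 1, g i x + g j x = 1)
    (Q : MPartition m) :
    seats g Q i + seats g Q j = m := by
  classical
  have h1 : seats g Q i = (Finset.univ.filter (Wins g Q i)).card := natCard_eq_filter _
  have h2 : seats g Q j = (Finset.univ.filter (Wins g Q j)).card := natCard_eq_filter _
  rw [h1, h2]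
  have hgs' : ∀ x ∈ Icc (0:ℝ) 1, g j x + g i x = 1 := fun x hx => by
    linarith [hgs x hx]
  rw [show (Finset.univ.filter (Wins g Q j)) = Finset.univ.filter (fun k => ¬ Wins g Q i k) from
    Finset.filter_congr fun k _ =>
      wins_dichotomy g hm hgmeas hgrange (Ne.symm hji) hgs' Q k]
  rw [Finset.card_filter_add_card_filter_not]
  simp
end comb

lemma main_aux (m : ℕ) (hm : 1 ≤ m) (g : Fin 2 → ℝ → ℝ)
    (hgmeas : ∀ j, Measurable (g j))
    (hgrange : ∀ j, ∀ x ∈ Icc (0:ℝ) 1, g j x ∈ Icc (0:ℝ) 1)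
    (i j : Fin 2) (hji : j ≠ i)
    (hgs : ∀ x ∈ Icc (0:ℝ) 1, g i x + g j x = 1)
    (mi : ℕ) (hmi : MaxCompetitive m g mi) (P : MPartition m)
    (hwins : mi / 2 ≤
      Nat.card {k : Fin m //
        vmass (g i) (P.dist k) = 1 / (2 * m) ∧ P.tie k = i}) :
    (sInf (seatSet g m i) + sSup (seatSet g m i)) / 2 ≤ seats g P i := by
  classical
  obtain ⟨P', hP'⟩ := flip_partition g P i j hji
  have hmem : seats g P i ∈ seatSet g m i := ⟨P, rfl⟩
  have hmem' : seats g P' i ∈ seatSet g m i := ⟨P', rfl⟩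
  have hbdd : ∀ u ∈ seatSet g m i, u ≤ m := by
    rintro u ⟨Q, rfl⟩
    calc seats g Q i = (Finset.univ.filter (Wins g Q i)).card := natCard_eq_filter _
      _ ≤ (Finset.univ : Finset (Fin m)).card := Finset.card_filter_le _ _
      _ = m := by simp
  have hInf_le : sInf (seatSet g m i) ≤ seats g P' i := Nat.sInf_le hmem'
  have hSup_le_m : sSup (seatSet g m i) ≤ m := csSup_le ⟨_, hmem⟩ hbdd
  have hVsum : (∫ x in Icc (0:ℝ) 1, g i x) + (∫ x in Icc (0:ℝ) 1, g j x) = 1 := by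
    rw [← integral_add (integrableOn_Icc01 (hgmeas i) (hgrange i))
      (integrableOn_Icc01 (hgmeas j) (hgrange j)),
      setIntegral_congr_fun measurableSet_Icc hgs, setIntegral_const, smul_eq_mul,
      mul_one]
    simp [Real.volume_Icc]
  rcases le_or_gt (∫ x in Icc (0:ℝ) 1, g i x) (1/2) with hVi | hVi
  · have hSup_le : sSup (seatSet g m i) ≤ mi := by
      refine csSup_le ⟨_, hmem⟩ ?_
      rintro u ⟨Q, rfl⟩
      exact seats_le_mi m hm g hgmeas hgrange mi hmi i hVi Q
    omega
  · have hVj : (∫ x in Icc (0:ℝ) 1, g j x) ≤ 1/2 := by linarith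
    have hA : ∀ Q : MPartition m, seats g Q j ≤ mi :=
      seats_le_mi m hm g hgmeas hgrange mi hmi j hVj
    have hpair : ∀ Q : MPartition m, seats g Q i + seats g Q j = m :=
      seats_pair g hm hgmeas hgrange hji hgs
    have hge : ∀ u ∈ seatSet g m i, m ≤ u + mi := by
      rintro u ⟨Q, rfl⟩
      have h1 := hA Q
      have h2 := hpair Q
      omega
    have hInf_ge : m ≤ sInf (seatSet g m i) + mi := hge _ (Nat.sInf_mem ⟨_, hmem⟩)
    have hs'_ge : m ≤ seats g P' i + mi := hge _ hmem'
    omega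


/-- If party `i` wins at least `⌊mi/2⌋` districts that are competitive for `i`
(ties broken in `i`'s favor), then the geometric target for `i` is satisfied,
regardless of whether `i` is a minority or majority party. -/
theorem competitive_wins_imply_geometric_target (m : ℕ) (hm : 1 ≤ m)
    (g : Fin 2 → ℝ → ℝ)
    (hgmeas : ∀ j, Measurable (g j))
    (hgrange : ∀ j, ∀ x ∈ Icc (0:ℝ) 1, g j x ∈ Icc (0:ℝ) 1)
    (hgsum : ∀ x ∈ Icc (0:ℝ) 1, g 0 x + g 1 x = 1)
    (i : Fin 2) (mi : ℕ) (hmi : MaxCompetitive m g mi) (P : MPartition m)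
    (hwins : mi / 2 ≤
      Nat.card {k : Fin m //
        vmass (g i) (P.dist k) = 1 / (2 * m) ∧ P.tie k = i}) :
    (sInf (seatSet g m i) + sSup (seatSet g m i)) / 2 ≤ seats g P i := by
  
  fin_cases i
  · exact main_aux m hm g hgmeas hgrange 0 1 (by decide) hgsum mi hmi P hwins
  · exact main_aux m hm g hgmeas hgrange 1 0 (by decide)
      (fun x hx => by linarith [hgsum x hx]) mi hmi P hwins
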